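/- For 0 < p < ∞, a function f = p⁺f⁺ + p⁻f⁻ in Hol(D,𝔹) belongs to the bicomplex Hardy space H^p(D,𝔹) if and only if (f⁺)* and f⁻ belong to the classical holomorphic Hardy space H^p(D). -/

import Mathlib

/-! In the idempotent decomposition `w = p⁺w⁺ + p⁻w⁻` the bicomplex norm is the quadratic mean
of `|w⁺|` and `|w⁻|`, so `‖w‖_𝔹^p` is squeezed between `2^{-p/2} max(|w⁺|^p, |w⁻|^p)` and
`|w⁺|^p + |w⁻|^p`, and the integral means over the circles `|z| = r` are comparable. Holomorphy of
the components comes from `∂̄f = 0`, which says `∂f/∂y = j ∂f/∂x`: the map `w ↦ w⁻` turns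
multiplication by `j` into multiplication by `i`, and so does `w ↦ (w⁺)*`, so both carry `f` to
functions satisfying the Cauchy–Riemann equations. -/

open Complex MeasureTheory Set Filter intervalIntegral

noncomputable section

/-- The bicomplex numbers, as ℂ² with componentwise addition. -/
abbrev B := ℂ × ℂ

namespace Bicomplex

/-- Bicomplex multiplication: (z₁ + j z₂)(w₁ + j w₂) with j² = −1. -/
def bmul (w v : B) : B := (w.1 * v.1 - w.2 * v.2, w.1 * v.2 + w.2 * v.1)

def bone : B := (1, 0)

/-- The imaginary unit j. -/
def jB : B := (0, 1)

/-- p⁺ = (1 + ij)/2. -/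
def pplus : B := (1/2, Complex.I/2)

/-- p⁻ = (1 − ij)/2. -/
def pminus : B := (1/2, -(Complex.I/2))

/-- Embedding of ℂ into 𝔹. -/
def c2b (c : ℂ) : B := (c, 0)

/-- The idempotent component w⁺ = Sc w − i Vec w. -/
def plus (w : B) : ℂ := w.1 - Complex.I * w.2

/-- The idempotent component w⁻ = Sc w + i Vec w. -/
def minus (w : B) : ℂ := w.1 + Complex.I * w.2

/-- Bicomplex conjugation: (z₁ + j z₂)‾ = z₁ − j z₂. -/
def bconj (w : B) : B := (w.1, -w.2)

/-- The bicomplex norm ‖w‖_𝔹 = √((|w⁺|² + |w⁻|²)/2). -/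
def bnorm (w : B) : ℝ := Real.sqrt ((‖plus w‖ ^ 2 + ‖minus w‖ ^ 2) / 2)

/-- The bicomplex exponential eᵛ = p⁺ e^{v⁺} + p⁻ e^{v⁻}. -/
def bexp (v : B) : B :=
  ((Complex.exp (plus v) + Complex.exp (minus v)) / 2,
   Complex.I * (Complex.exp (plus v) - Complex.exp (minus v)) / 2)

/-- Bicomplex powers. -/
def bpow (w : B) : ℕ → B
  | 0 => bone
  | n + 1 => bmul w (bpow w n)

/-- The open unit disk in ℂ. -/
def DD : Set ℂ := Metric.ball 0 1

/-- ∂/∂x for 𝔹-valued functions (directional real derivative along 1). -/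
def dxd (f : ℂ → B) (z : ℂ) : B := fderiv ℝ f z 1

/-- ∂/∂y for 𝔹-valued functions (directional real derivative along i). -/
def dyd (f : ℂ → B) (z : ℂ) : B := fderiv ℝ f z Complex.I

/-- The bicomplex Cauchy–Riemann operator ∂̄ = (1/2)(∂/∂x + j ∂/∂y). -/
def dbar (f : ℂ → B) (z : ℂ) : B := (2 : ℂ)⁻¹ • (dxd f z + bmul jB (dyd f z))

/-- The bicomplex operator ∂ = (1/2)(∂/∂x − j ∂/∂y). -/
def dd (f : ℂ → B) (z : ℂ) : B := (2 : ℂ)⁻¹ • (dxd f z - bmul jB (dyd f z))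

/-- Wirtinger derivative ∂/∂z on 𝔹-valued functions. -/
def czB (f : ℂ → B) (z : ℂ) : B := (2 : ℂ)⁻¹ • (dxd f z - Complex.I • dyd f z)

/-- Wirtinger derivative ∂/∂z* on 𝔹-valued functions. -/
def czbarB (f : ℂ → B) (z : ℂ) : B := (2 : ℂ)⁻¹ • (dxd f z + Complex.I • dyd f z)

/-- Wirtinger derivative ∂/∂z on ℂ-valued functions. -/
def cdz (g : ℂ → ℂ) (z : ℂ) : ℂ :=
  (2 : ℂ)⁻¹ * (fderiv ℝ g z 1 - Complex.I * fderiv ℝ g z Complex.I)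

/-- Wirtinger derivative ∂/∂z* on ℂ-valued functions. -/
def cdzbar (g : ℂ → ℂ) (z : ℂ) : ℂ :=
  (2 : ℂ)⁻¹ * (fderiv ℝ g z 1 + Complex.I * fderiv ℝ g z Complex.I)

/-- The point r e^{iθ}. -/
def circ (r θ : ℝ) : ℂ := (r : ℂ) * Complex.exp (θ * Complex.I)

/-- The bicomplex Hardy condition sup_{0<r<1} ∫₀^{2π} ‖f(re^{iθ})‖_𝔹^p dθ < ∞. -/
def HardyBound (p : ℝ) (f : ℂ → B) : Prop :=
  ∃ M : ℝ, ∀ r : ℝ, 0 < r → r < 1 →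
    (∫ θ in (0:ℝ)..(2 * Real.pi), bnorm (f (circ r θ)) ^ p) ≤ M

/-- The complex Hardy condition sup_{0<r<1} ∫₀^{2π} |g(re^{iθ})|^p dθ < ∞. -/
def CHardyBound (p : ℝ) (g : ℂ → ℂ) : Prop :=
  ∃ M : ℝ, ∀ r : ℝ, 0 < r → r < 1 →
    (∫ θ in (0:ℝ)..(2 * Real.pi), ‖g (circ r θ)‖ ^ p) ≤ M

/-- Membership in L^p(D, 𝔹). -/
def MemLpB (p : ℝ) (f : ℂ → B) : Prop :=
  IntegrableOn (fun z => bnorm (f z) ^ p) DD volume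

/-- Membership in the complex L^p(D). -/
def MemLpC (p : ℝ) (g : ℂ → ℂ) : Prop :=
  IntegrableOn (fun z => ‖g z‖ ^ p) DD volume

/-- Stolz (nontangential) approach region at ω with aperture M. -/
def stolz (ω : ℂ) (M : ℝ) : Set ℂ :=
  {z | z ∈ DD ∧ ‖z - ω‖ < M * (1 - ‖z‖)}

/-- Nontangential limit of f at the boundary point ω. -/
def HasNTLimit (f : ℂ → B) (ω : ℂ) (L : B) : Prop :=
  ∀ M : ℝ, 1 < M → Tendsto f (nhdsWithin ω (stolz ω M)) (nhds L)

/-- The bicomplex Theodorescu operator. -/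
def TB (f : ℂ → B) (z : ℂ) : B :=
  (-(1 / Real.pi)) •
    ((∫ ζ in DD, ((ζ - z)⁻¹ : ℂ) • f ζ) +
     (∫ ζ in DD, ((starRingEnd ℂ ζ - starRingEnd ℂ z)⁻¹ : ℂ) • bconj (f ζ)))

/-- Membership in the Sobolev space W^{m,q}(D, 𝔹). -/
def MemW (m : ℕ) (q : ℝ) (A : ℂ → B) : Prop :=
  ∀ k ≤ m, IntegrableOn (fun z => ‖iteratedFDeriv ℝ k A z‖ ^ q) DD volume

/-- Iterates of ∂̄. -/
def dbarIter : ℕ → (ℂ → B) → (ℂ → B)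
  | 0, f => f
  | n + 1, f => dbar (dbarIter n f)

/-- The operator ∂̄ − A. -/
def aop (A : ℂ → B) (f : ℂ → B) : ℂ → B := fun z => dbar f z - bmul (A z) (f z)

/-- Iterates of ∂̄ − A. -/
def aopIter (A : ℂ → B) : ℕ → (ℂ → B) → (ℂ → B)
  | 0, f => f
  | n + 1, f => aop A (aopIter A n f)

/-- The operator ∂̄ − A − B C(·). -/
def vop (A Bc : ℂ → B) (f : ℂ → B) : ℂ → B :=
  fun z => dbar f z - bmul (A z) (f z) - bmul (Bc z) (bconj (f z))

/-- Iterates of ∂̄ − A − B C(·). -/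
def vopIter (A Bc : ℂ → B) : ℕ → (ℂ → B) → (ℂ → B)
  | 0, f => f
  | n + 1, f => vop A Bc (vopIter A Bc n f)

/-- Bicomplexification û of u = x + iy is x + jy. -/
def hatc (u : ℂ) : B := ((u.re : ℂ), (u.im : ℂ))

/-- The bicomplexification (z*)ˆ = x − jy of z* = x − iy. -/
def hatConj (z : ℂ) : B := ((z.re : ℂ), (-z.im : ℂ))

@[fun_prop]
lemma continuous_bnorm : Continuous bnorm := by
  unfold bnorm plus minus
  fun_prop

lemma bnorm_nonneg (w : B) : 0 ≤ bnorm w := Real.sqrt_nonneg _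

lemma abs_le_sqrt_two_mul_sqrt_half_sq_add (a b : ℝ) :
    |a| ≤ √2 * √((a ^ 2 + b ^ 2) / 2) := by
  rw [← Real.sqrt_mul zero_le_two, mul_div_cancel₀ _ two_ne_zero, ← Real.sqrt_sq_eq_abs]
  exact Real.sqrt_le_sqrt (le_add_of_nonneg_right (sq_nonneg b))

lemma sqrt_half_sq_add_le_max {a b : ℝ} (ha : 0 ≤ a) (hb : 0 ≤ b) :
    √((a ^ 2 + b ^ 2) / 2) ≤ max a b := by
  rw [Real.sqrt_le_left (ha.trans (le_max_left a b))]
  have := pow_le_pow_left₀ ha (le_max_left a b) 2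
  have := pow_le_pow_left₀ hb (le_max_right a b) 2
  linarith

lemma norm_plus_le (w : B) : ‖plus w‖ ≤ √2 * bnorm w := by
  simpa only [bnorm, abs_norm] using abs_le_sqrt_two_mul_sqrt_half_sq_add ‖plus w‖ ‖minus w‖

lemma norm_minus_le (w : B) : ‖minus w‖ ≤ √2 * bnorm w := by
  simpa only [bnorm, abs_norm, add_comm] using
    abs_le_sqrt_two_mul_sqrt_half_sq_add ‖minus w‖ ‖plus w‖

lemma bnorm_le_max (w : B) : bnorm w ≤ max ‖plus w‖ ‖minus w‖ :=
  sqrt_half_sq_add_le_max (norm_nonneg _) (norm_nonneg _)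

lemma dyd_eq_bmul_jB_dxd {f : ℂ → B} {z : ℂ} (h : dbar f z = 0) :
    dyd f z = bmul jB (dxd f z) := by
  rw [dbar, smul_eq_zero, or_iff_right (by norm_num)] at h
  obtain ⟨h₁, h₂⟩ := Prod.ext_iff.mp h
  simp only [bmul, jB, Prod.fst_add, Prod.snd_add, Prod.fst_zero, Prod.snd_zero] at h₁ h₂
  ext
  · simp only [bmul, jB]; linear_combination h₂
  · simp only [bmul, jB]; linear_combination -h₁

lemma differentiableOn_comp_of_dbar_eq_zero {E : Type*} [NormedAddCommGroup E]
    [NormedSpace ℂ E] (L : B →L[ℝ] E) (hL : ∀ w, L (bmul jB w) = I • L w) {s : Set ℂ}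
    (hs : IsOpen s) {f : ℂ → B} (hdiff : DifferentiableOn ℝ f s) (hhol : ∀ z ∈ s, dbar f z = 0) :
    DifferentiableOn ℂ (fun z => L (f z)) s := by
  intro z hz
  have hf := (hdiff z hz).differentiableAt (hs.mem_nhds hz)
  have hcr : (L.comp (fderiv ℝ f z)) I = I • (L.comp (fderiv ℝ f z)) 1 := by
    simpa [dxd, dyd] using congrArg L (dyd_eq_bmul_jB_dxd (hhol z hz)) |>.trans (hL _)
  exact ((L.hasFDerivAt.comp z hf.hasFDerivAt).complexOfReal_hasFDerivAt hcr)
    |>.differentiableAt.differentiableWithinAt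

def minusCLM : B →L[ℝ] ℂ := ContinuousLinearMap.fst ℝ ℂ ℂ + I • ContinuousLinearMap.snd ℝ ℂ ℂ

lemma minus_bmul_jB (w : B) : minus (bmul jB w) = I * minus w := by
  simp only [minus, bmul, jB]
  linear_combination -w.2 * I_sq

def conjPlusCLM : B →L[ℝ] ℂ :=
  conjCLE.toContinuousLinearMap.comp
    (ContinuousLinearMap.fst ℝ ℂ ℂ - I • ContinuousLinearMap.snd ℝ ℂ ℂ)

lemma conj_plus_bmul_jB (w : B) :
    starRingEnd ℂ (plus (bmul jB w)) = I * starRingEnd ℂ (plus w) := by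
  simp only [plus, bmul, jB, map_sub, map_mul, map_add, map_one, conj_I, map_zero]
  linear_combination -(starRingEnd ℂ w.2) * I_sq

lemma circ_mem_DD {r : ℝ} (hr0 : 0 < r) (hr1 : r < 1) (θ : ℝ) : circ r θ ∈ DD := by
  simpa [DD, circ, abs_of_pos hr0] using hr1

lemma intervalIntegrable_comp_circ {u : ℂ → ℝ} (hu : ContinuousOn u DD) {r : ℝ}
    (hr0 : 0 < r) (hr1 : r < 1) (a b : ℝ) :
    IntervalIntegrable (fun θ => u (circ r θ)) volume a b :=
  (hu.comp_continuous (by unfold circ; fun_prop) (circ_mem_DD hr0 hr1)).intervalIntegrable a b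

def CircleMeanBound (u : ℂ → ℝ) : Prop :=
  ∃ M : ℝ, ∀ r : ℝ, 0 < r → r < 1 → (∫ θ in (0:ℝ)..(2 * Real.pi), u (circ r θ)) ≤ M

lemma hardyBound_iff {p : ℝ} {f : ℂ → B} :
    HardyBound p f ↔ CircleMeanBound (fun z => bnorm (f z) ^ p) := Iff.rfl

lemma cHardyBound_iff {p : ℝ} {g : ℂ → ℂ} :
    CHardyBound p g ↔ CircleMeanBound (fun z => ‖g z‖ ^ p) := Iff.rfl

namespace CircleMeanBound

variable {u v : ℂ → ℝ}

lemma mono (hu : ContinuousOn u DD) (hv : ContinuousOn v DD) (huv : ∀ z ∈ DD, u z ≤ v z)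
    (h : CircleMeanBound v) : CircleMeanBound u := by
  obtain ⟨M, hM⟩ := h
  refine ⟨M, fun r hr0 hr1 => le_trans ?_ (hM r hr0 hr1)⟩
  exact integral_mono_on Real.two_pi_pos.le (intervalIntegrable_comp_circ hu hr0 hr1 _ _)
    (intervalIntegrable_comp_circ hv hr0 hr1 _ _) fun θ _ => huv _ (circ_mem_DD hr0 hr1 θ)

lemma const_mul {c : ℝ} (hc : 0 ≤ c) (h : CircleMeanBound u) :
    CircleMeanBound (fun z => c * u z) := by
  obtain ⟨M, hM⟩ := h
  refine ⟨c * M, fun r hr0 hr1 => ?_⟩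
  simp only [intervalIntegral.integral_const_mul]
  exact mul_le_mul_of_nonneg_left (hM r hr0 hr1) hc

lemma add (hu : ContinuousOn u DD) (hv : ContinuousOn v DD) (hu' : CircleMeanBound u)
    (hv' : CircleMeanBound v) : CircleMeanBound (fun z => u z + v z) := by
  obtain ⟨M, hM⟩ := hu'
  obtain ⟨N, hN⟩ := hv'
  refine ⟨M + N, fun r hr0 hr1 => ?_⟩
  rw [integral_add (intervalIntegrable_comp_circ hu hr0 hr1 _ _)
    (intervalIntegrable_comp_circ hv hr0 hr1 _ _)]
  exact add_le_add (hM r hr0 hr1) (hN r hr0 hr1)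

end CircleMeanBound

section HardyComparison

variable {p : ℝ} {f : ℂ → B} {g h : ℂ → ℂ}

lemma cHardyBound_of_norm_le (hp : 0 ≤ p) (hf : ContinuousOn f DD) (hg : ContinuousOn g DD)
    {C : ℝ} (hC : 0 ≤ C) (hgf : ∀ z ∈ DD, ‖g z‖ ≤ C * bnorm (f z)) (hF : HardyBound p f) :
    CHardyBound p g := by
  rw [hardyBound_iff] at hF
  rw [cHardyBound_iff]
  refine CircleMeanBound.mono (v := fun z => C ^ p * bnorm (f z) ^ p)
    (by fun_prop (disch := simp [hp])) (by fun_prop (disch := simp [hp])) (fun z hz => ?_)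
    (hF.const_mul (Real.rpow_nonneg hC p))
  rw [← Real.mul_rpow hC (bnorm_nonneg _)]
  exact Real.rpow_le_rpow (norm_nonneg _) (hgf z hz) hp

lemma hardyBound_of_le_max (hp : 0 ≤ p) (hf : ContinuousOn f DD) (hg : ContinuousOn g DD)
    (hh : ContinuousOn h DD) (hfgh : ∀ z ∈ DD, bnorm (f z) ≤ max ‖g z‖ ‖h z‖)
    (hG : CHardyBound p g) (hH : CHardyBound p h) : HardyBound p f := by
  rw [cHardyBound_iff] at hG hH
  rw [hardyBound_iff]
  refine CircleMeanBound.mono (v := fun z => ‖g z‖ ^ p + ‖h z‖ ^ p)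
    (by fun_prop (disch := simp [hp])) (by fun_prop (disch := simp [hp])) (fun z hz => ?_)
    (hG.add (by fun_prop (disch := simp [hp])) (by fun_prop (disch := simp [hp])) hH)
  calc bnorm (f z) ^ p ≤ max ‖g z‖ ‖h z‖ ^ p :=
        Real.rpow_le_rpow (bnorm_nonneg _) (hfgh z hz) hp
    _ = max (‖g z‖ ^ p) (‖h z‖ ^ p) :=
        (Real.monotoneOn_rpow_Ici_of_exponent_nonneg hp).map_max (norm_nonneg _) (norm_nonneg _)
    _ ≤ ‖g z‖ ^ p + ‖h z‖ ^ p :=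
        max_le_add_of_nonneg (by positivity) (by positivity)

end HardyComparison

end Bicomplex
open Bicomplex in
/-- f ∈ H^p(D,𝔹) iff (f⁺)* and f⁻ belong to the classical H^p(D). -/
theorem bicomplex_hardy_iff_components (p : ℝ) (hp : 0 < p) (f : ℂ → B)
    (hdiff : DifferentiableOn ℝ f DD) (hhol : ∀ z ∈ DD, dbar f z = 0) :
    HardyBound p f ↔
      ((DifferentiableOn ℂ (fun z => starRingEnd ℂ (plus (f z))) DD ∧
        CHardyBound p (fun z => starRingEnd ℂ (plus (f z)))) ∧
       (DifferentiableOn ℂ (fun z => minus (f z)) DD ∧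
        CHardyBound p (fun z => minus (f z)))) := by
  have hplus : DifferentiableOn ℂ (fun z => starRingEnd ℂ (plus (f z))) DD :=
    differentiableOn_comp_of_dbar_eq_zero conjPlusCLM conj_plus_bmul_jB Metric.isOpen_ball
      hdiff hhol
  have hminus : DifferentiableOn ℂ (fun z => minus (f z)) DD :=
    differentiableOn_comp_of_dbar_eq_zero minusCLM minus_bmul_jB Metric.isOpen_ball hdiff hhol
  have hf := hdiff.continuousOn
  simp only [hplus, hminus, true_and]
  constructor
  · intro hF
    exact ⟨cHardyBound_of_norm_le hp.le hf hplus.continuousOn (Real.sqrt_nonneg 2)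
        (fun z _ => (norm_conj _).trans_le (norm_plus_le _)) hF,
      cHardyBound_of_norm_le hp.le hf hminus.continuousOn (Real.sqrt_nonneg 2)
        (fun z _ => norm_minus_le _) hF⟩
  · rintro ⟨hP, hM⟩
    exact hardyBound_of_le_max hp.le hf hplus.continuousOn hminus.continuousOn
      (fun z _ => by simpa only [norm_conj] using bnorm_le_max (f z)) hP hM
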